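/- arXiv:0802.4236 — 6 statements merged into one kernel-verified Lean document; each statement's English description precedes it below -/
import Mathlib

section
/- Let {ψ_x} be a frame in H with dual frame {ψ^x}. For every bounded linear operator A on H, the operator F A F⁻ on L²(X) is the integral operator with kernel κ(A; x, x') = ⟨ψ_x, A ψ^{x'}⟩, i.e., ((F A F⁻)Φ)(x) = ∫_X ⟨ψ_x, A ψ^{x'}⟩ Φ(x') dμ(x') for μ-a.a. x. -/
open MeasureTheory ContinuousLinearMap

/-- For every bounded operator `A` on `H`, the operator `F A F⁻` on the
reproducing kernel Hilbert space `Ran(F)` is the integral operator with kernel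
`κ(A; x, x') = ⟨ψ_x, A ψ^{x'}⟩`, where `ψ^{x'} = M⁻¹ ψ_{x'} = N (ψ x')`. -/
theorem bounded_operator_integral_kernel_on_range
    {H : Type*} [NormedAddCommGroup H] [InnerProductSpace ℂ H] [CompleteSpace H]
    [TopologicalSpace.SeparableSpace H]
    {X : Type*} [MeasurableSpace X] (μ : Measure X)
    (ψ : X → H) (α β : ℝ) (hα : 0 < α) (hαβ : α ≤ β)
    (hmeas : ∀ φ : H, Measurable fun x => (inner ℂ (ψ x) φ : ℂ))
    (hlow : ∀ φ : H, α * ‖φ‖ ^ 2 ≤ ∫ x, ‖(inner ℂ (ψ x) φ : ℂ)‖ ^ 2 ∂μ)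
    (hup : ∀ φ : H, ∫ x, ‖(inner ℂ (ψ x) φ : ℂ)‖ ^ 2 ∂μ ≤ β * ‖φ‖ ^ 2)
    (F : H →L[ℂ] Lp ℂ 2 μ)
    (hF : ∀ φ : H, (F φ : X → ℂ) =ᵐ[μ] fun x => (inner ℂ (ψ x) φ : ℂ))
    -- the pseudo-inverse `Fi`:
    (Fi : Lp ℂ 2 μ →L[ℂ] H)
    (hFi1 : Fi.comp F = ContinuousLinearMap.id ℂ H)
    (hFi2 : ∀ Θ ∈ (LinearMap.range (F : H →ₗ[ℂ] Lp ℂ 2 μ))ᗮ, Fi Θ = 0)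
    -- `N = M⁻¹` is the bounded inverse of the metric operator `M = F*F`,
    -- so that the dual frame is `ψ^x = N (ψ x)`:
    (N : H →L[ℂ] H)
    (hN1 : N.comp ((ContinuousLinearMap.adjoint F).comp F) = ContinuousLinearMap.id ℂ H)
    (hN2 : ((ContinuousLinearMap.adjoint F).comp F).comp N = ContinuousLinearMap.id ℂ H)
    (A : H →L[ℂ] H) :
    ∀ Φ : Lp ℂ 2 μ,
      (F (A (Fi Φ)) : X → ℂ) =ᵐ[μ]
        fun x => ∫ x', (inner ℂ (ψ x) (A (N (ψ x'))) : ℂ) * (Φ : X → ℂ) x' ∂μ := by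
  intro Φ
  set K : Submodule ℂ (Lp ℂ 2 μ) := LinearMap.range (F : H →ₗ[ℂ] Lp ℂ 2 μ) with hK
  have hFadj : ∀ Θ ∈ Kᗮ, (ContinuousLinearMap.adjoint F) Θ = 0 := by
    intro Θ hΘ
    rw [← inner_self_eq_zero (𝕜 := ℂ), ContinuousLinearMap.adjoint_inner_left]
    exact (Submodule.mem_orthogonal' K Θ).mp hΘ _ ⟨_, rfl⟩
  have hdense : Dense ((K ⊔ Kᗮ : Submodule ℂ (Lp ℂ 2 μ)) : Set (Lp ℂ 2 μ)) := by
    rw [Submodule.dense_iff_topologicalClosure_eq_top,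
      Submodule.topologicalClosure_eq_top_iff, Submodule.eq_bot_iff]
    intro Θ hΘ
    have h1 : Θ ∈ Kᗮ := by
      intro v hv
      exact hΘ v (Submodule.mem_sup_left hv)
    exact inner_self_eq_zero.mp (hΘ Θ (Submodule.mem_sup_right h1))
  have hFiG : Fi = N.comp (ContinuousLinearMap.adjoint F) := by
    apply DFunLike.coe_injective
    refine Continuous.ext_on hdense Fi.continuous (N.comp (ContinuousLinearMap.adjoint F)).continuous ?_
    intro Θ hΘ
    obtain ⟨y, hy, z, hz, rfl⟩ := Submodule.mem_sup.mp hΘ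
    obtain ⟨φ, rfl⟩ := hy
    have hFφ : (F : H →ₗ[ℂ] Lp ℂ 2 μ) φ = F φ := rfl
    simp only [hFφ, ContinuousLinearMap.coe_coe, ContinuousLinearMap.comp_apply, map_add]
    rw [hFi2 z hz, hFadj z hz, map_zero]
    have h1 : Fi (F φ) = φ := DFunLike.congr_fun hFi1 φ
    have h2 : N ((ContinuousLinearMap.adjoint F) (F φ)) = φ :=
      DFunLike.congr_fun hN1 φ
    rw [h1, h2]
  have key : ∀ x, (inner ℂ (ψ x) (A (N ((ContinuousLinearMap.adjoint F) Φ))) : ℂ)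
      = ∫ x', (inner ℂ (ψ x) (A (N (ψ x'))) : ℂ) * (Φ : X → ℂ) x' ∂μ := by
    intro x
    set B := ContinuousLinearMap.adjoint (A.comp N) with hB
    have h1 : (inner ℂ (ψ x) (A (N ((ContinuousLinearMap.adjoint F) Φ))) : ℂ)
        = inner ℂ (F (B (ψ x))) Φ := by
      rw [← ContinuousLinearMap.adjoint_inner_right F, hB,
        ContinuousLinearMap.adjoint_inner_left]
      rfl
    rw [h1, MeasureTheory.L2.inner_def]
    refine integral_congr_ae ?_
    filter_upwards [hF (B (ψ x))] with x' hx'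
    rw [hx', RCLike.inner_apply, inner_conj_symm, hB,
      ContinuousLinearMap.adjoint_inner_left]
    exact mul_comm _ _
  filter_upwards [hF (A (Fi Φ))] with x hx
  rw [hx, hFiG]
  exact key x
end

section
/- Let {ψ_x}_{x∈X} be a tight frame in H (so M = c·I for some c > 0). Then for every positive bounded operator B on H, ⟨ψ_x, B ψ_x⟩ ≥ 0 for all x, and ∫_X ⟨ψ_x, B ψ^x⟩ dμ(x) < +∞ if and only if B is trace class. -/
set_option maxHeartbeats 1000000
set_option synthInstance.maxHeartbeats 1000000

open MeasureTheory ContinuousLinearMap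
open scoped ENNReal NNReal

section Aux

variable {H : Type*} [NormedAddCommGroup H] [InnerProductSpace ℂ H] [CompleteSpace H]
  {ι : Type*}

/-- Parseval: the squared inner ℂ products with a Hilbert basis sum to the squared norm. -/
lemma my_parseval (e : HilbertBasis ι ℂ H) (v : H) :
    HasSum (fun i => ‖(inner ℂ (e i) v : ℂ)‖ ^ 2) (‖v‖ ^ 2) := by
  have h := e.hasSum_inner_mul_inner v v
  have h2 : ∀ i, (inner ℂ v (e i) : ℂ) * inner ℂ (e i) v
      = ((‖(inner ℂ (e i) v : ℂ)‖ ^ 2 : ℝ) : ℂ) := by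
    intro i
    rw [← inner_conj_symm v (e i), RCLike.conj_mul]
    norm_cast
  have h3 : (inner ℂ v v : ℂ) = ((‖v‖ ^ 2 : ℝ) : ℂ) := by
    simp [inner_self_eq_norm_sq_to_K, ← Complex.ofReal_pow]
  rw [h3] at h
  simp_rw [h2] at h
  exact Complex.hasSum_ofReal.mp h

/-- An orthonormal family in a separable space is countable. -/
lemma my_countable (e : HilbertBasis ι ℂ H) [TopologicalSpace.SeparableSpace H] :
    Countable ι := by
  refine Pairwise.countable_of_isOpen_disjoint
    (s := fun i => Metric.ball (e i) (1/2)) ?_ (fun i => Metric.isOpen_ball)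
    (fun i => Metric.nonempty_ball.2 (by norm_num))
  intro i j hij
  apply Metric.ball_disjoint_ball
  have h1 : ‖e i - e j‖ ^ 2 = 2 := by
    have := e.orthonormal
    rw [@norm_sub_sq ℂ]
    rw [this.1 i, this.1 j, this.2 hij]
    norm_num
  have h2 : (1:ℝ) ≤ ‖e i - e j‖ := by nlinarith [norm_nonneg (e i - e j)]
  rw [dist_eq_norm]
  linarith

/-- Hilbert–Schmidt property passes to the adjoint. -/
lemma my_adjoint_hs (e : HilbertBasis ι ℂ H) [TopologicalSpace.SeparableSpace H]
    (S : H →L[ℂ] H) (hS : Summable fun i => ‖S (e i)‖ ^ 2) :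
    Summable fun i => ‖(adjoint S) (e i)‖ ^ 2 := by
  have : Countable ι := my_countable e
  have hnn : ∀ (T : H →L[ℂ] H) (i : ι), 0 ≤ ‖T (e i)‖ ^ 2 := fun T i => sq_nonneg _
  -- work in ℝ≥0∞
  have key : ∑' i, ENNReal.ofReal (‖(adjoint S) (e i)‖ ^ 2)
      = ∑' i, ENNReal.ofReal (‖S (e i)‖ ^ 2) := by
    have lhs : ∀ i, ENNReal.ofReal (‖(adjoint S) (e i)‖ ^ 2)
        = ∑' j, ENNReal.ofReal (‖(inner ℂ (e j) ((adjoint S) (e i)) : ℂ)‖ ^ 2) := by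
      intro i
      have h := my_parseval e ((adjoint S) (e i))
      rw [← h.tsum_eq, ENNReal.ofReal_tsum_of_nonneg (fun j => sq_nonneg _) h.summable]
    calc ∑' i, ENNReal.ofReal (‖(adjoint S) (e i)‖ ^ 2)
        = ∑' i, ∑' j, ENNReal.ofReal (‖(inner ℂ (e j) ((adjoint S) (e i)) : ℂ)‖ ^ 2) := by
          simp_rw [lhs]
      _ = ∑' j, ∑' i, ENNReal.ofReal (‖(inner ℂ (e j) ((adjoint S) (e i)) : ℂ)‖ ^ 2) :=
          ENNReal.tsum_comm
      _ = ∑' j, ENNReal.ofReal (‖S (e j)‖ ^ 2) := by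
          congr 1; ext j
          have h := my_parseval e (S (e j))
          rw [← h.tsum_eq, ENNReal.ofReal_tsum_of_nonneg (fun i => sq_nonneg _) h.summable]
          congr 1; ext i
          congr 2
          rw [adjoint_inner_right]
          exact norm_inner_symm _ _
  have hfin : ∑' i, ENNReal.ofReal (‖(adjoint S) (e i)‖ ^ 2) ≠ ⊤ := by
    rw [key, ← ENNReal.ofReal_tsum_of_nonneg (hnn S) hS]
    exact ENNReal.ofReal_ne_top
  have := ENNReal.summable_toReal hfin
  simpa [ENNReal.toReal_ofReal (sq_nonneg _)] using this

end Aux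

/-- For a tight frame `{ψ_x}` (metric operator `M = c·I`, dual frame
`ψ^x = c⁻¹ ψ_x`) and a positive bounded operator `B` on `H`, one has
`⟨ψ_x, B ψ_x⟩ ≥ 0` for all `x`, and `∫ ⟨ψ_x, B ψ^x⟩ dμ < ∞` if and only if `B` is trace
class (i.e. a product of two Hilbert–Schmidt operators). -/
theorem tight_frame_trace_class_criterion
    {H : Type*} [NormedAddCommGroup H] [InnerProductSpace ℂ H] [CompleteSpace H]
    [TopologicalSpace.SeparableSpace H]
    {ι : Type*} (e : HilbertBasis ι ℂ H)
    {X : Type*} [MeasurableSpace X] (μ : Measure X)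
    (ψ : X → H) (c : ℝ) (hc : 0 < c)
    (hmeas : ∀ φ : H, Measurable fun x => (inner ℂ (ψ x) φ : ℂ))
    (hmem : ∀ φ : H, MemLp (fun x => (inner ℂ (ψ x) φ : ℂ)) 2 μ)
    -- tightness: the frame bounds coincide (`M = c·I`):
    (htight : ∀ φ : H, ∫ x, ‖(inner ℂ (ψ x) φ : ℂ)‖ ^ 2 ∂μ = c * ‖φ‖ ^ 2)
    (B : H →L[ℂ] H) (hB : B.IsPositive) :
    (∀ x : X, 0 ≤ (inner ℂ (ψ x) (B (ψ x)) : ℂ).re) ∧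
    (Integrable (fun x => (inner ℂ (ψ x) (B (c⁻¹ • ψ x)) : ℂ).re) μ ↔
      ∃ S T : H →L[ℂ] H, B = S.comp T ∧
        Summable (fun i => ‖S (e i)‖ ^ 2) ∧ Summable (fun i => ‖T (e i)‖ ^ 2)) := by
  have hcount : Countable ι := my_countable e
  have h0 : (0 : H →L[ℂ] H) ≤ B := (nonneg_iff_isPositive B).2 hB
  set R : H →L[ℂ] H := CFC.sqrt B with hRdef
  have hRR : R * R = B := CFC.sqrt_mul_sqrt_self B h0
  have hRsa : IsSelfAdjoint R := IsSelfAdjoint.of_nonneg (CFC.sqrt_nonneg (a := B))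
  have hRadj : adjoint R = R := hRsa
  -- pointwise identity
  have hpt : ∀ v : H, (inner ℂ v (B v) : ℂ).re = ‖R v‖ ^ 2 := by
    intro v
    have h1 : B v = R (R v) := by rw [← hRR]; rfl
    rw [h1, ← adjoint_inner_left R (R v) v, hRadj]
    simp [inner_self_eq_norm_sq_to_K, ← Complex.ofReal_pow]
  refine ⟨fun x => by rw [hpt]; positivity, ?_⟩
  -- the integrand
  have hint_eq : ∀ x : X, (inner ℂ (ψ x) (B (c⁻¹ • ψ x)) : ℂ).re = c⁻¹ * ‖R (ψ x)‖ ^ 2 := by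
    intro x
    have h : (inner ℂ (ψ x) (B (c⁻¹ • ψ x)) : ℂ) = ((c⁻¹ : ℝ) : ℂ) * inner ℂ (ψ x) (B (ψ x)) := by
      rw [map_smul_of_tower, RCLike.real_smul_eq_coe_smul (K := ℂ), inner_smul_right]
      norm_cast
    rw [h, Complex.mul_re, Complex.ofReal_re, Complex.ofReal_im, hpt]
    ring
  -- family f i x
  set f : ι → X → ℝ := fun i x => ‖(inner ℂ (ψ x) (R (e i)) : ℂ)‖ ^ 2 with hfdef
  have hfmeas : ∀ i, Measurable (f i) := fun i => ((hmeas (R (e i))).norm).pow_const 2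
  have hfnn : ∀ i x, 0 ≤ f i x := fun i x => sq_nonneg _
  have hfint : ∀ i, Integrable (f i) μ := by
    intro i
    have h := (hmem (R (e i))).integrable_norm_rpow two_ne_zero ENNReal.ofNat_ne_top
    simpa [ENNReal.toReal_ofNat, Real.rpow_natCast, hfdef] using h
  have hfintegral : ∀ i, ∫ x, f i x ∂μ = c * ‖R (e i)‖ ^ 2 := fun i => htight (R (e i))
  have hfHasSum : ∀ x, HasSum (fun i => f i x) (‖R (ψ x)‖ ^ 2) := by
    intro x
    have h := my_parseval e (R (ψ x))
    have heq : ∀ i, ‖(inner ℂ (e i) (R (ψ x)) : ℂ)‖ ^ 2 = f i x := by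
      intro i
      have h2 := adjoint_inner_left R (e i) (ψ x)
      rw [hRadj] at h2
      rw [hfdef]
      dsimp only
      rw [← h2, norm_inner_symm]
    rw [show (fun i => ‖(inner ℂ (e i) (R (ψ x)) : ℂ)‖ ^ 2) = fun i => f i x from funext heq] at h
    exact h
  -- claim A
  have claimA : Integrable (fun x => ‖R (ψ x)‖ ^ 2) μ ↔ Summable (fun i => ‖R (e i)‖ ^ 2) := by
    constructor
    · intro hInt
      have hsum : Summable (fun i => c * ‖R (e i)‖ ^ 2) := by
        apply summable_of_sum_le (c := ∫ x, ‖R (ψ x)‖ ^ 2 ∂μ)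
          (fun i => mul_nonneg hc.le (sq_nonneg _))
        intro s
        calc ∑ i ∈ s, c * ‖R (e i)‖ ^ 2 = ∑ i ∈ s, ∫ x, f i x ∂μ := by
              simp_rw [hfintegral]
          _ = ∫ x, ∑ i ∈ s, f i x ∂μ := (integral_finset_sum s fun i _ => hfint i).symm
          _ ≤ ∫ x, ‖R (ψ x)‖ ^ 2 ∂μ := by
              apply integral_mono (integrable_finset_sum s fun i _ => hfint i) hInt
              intro x
              exact sum_le_hasSum s (fun i _ => hfnn i x) (hfHasSum x)
      have := hsum.mul_left c⁻¹
      simpa [← mul_assoc, inv_mul_cancel₀ hc.ne'] using this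
    · intro hsum
      set G : X → ℝ≥0∞ := fun x => ∑' i, ENNReal.ofReal (f i x) with hGdef
      have hGmeas : Measurable G :=
        Measurable.ennreal_tsum fun i => (hfmeas i).ennreal_ofReal
      have hGg : ∀ x, G x = ENNReal.ofReal (‖R (ψ x)‖ ^ 2) := by
        intro x
        rw [hGdef]
        dsimp only
        rw [← (hfHasSum x).tsum_eq,
          ENNReal.ofReal_tsum_of_nonneg (fun i => hfnn i x) (hfHasSum x).summable]
      have hgmeas : Measurable (fun x => ‖R (ψ x)‖ ^ 2) := by
        have : (fun x => ‖R (ψ x)‖ ^ 2) = fun x => (G x).toReal := by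
          ext x; rw [hGg x, ENNReal.toReal_ofReal (sq_nonneg _)]
        rw [this]
        exact hGmeas.ennreal_toReal
      have hGlint : ∫⁻ x, G x ∂μ < ⊤ := by
        rw [hGdef]
        dsimp only
        rw [lintegral_tsum fun i => ((hfmeas i).ennreal_ofReal).aemeasurable]
        have heq : ∀ i, ∫⁻ x, ENNReal.ofReal (f i x) ∂μ = ENNReal.ofReal (c * ‖R (e i)‖ ^ 2) := by
          intro i
          rw [← ofReal_integral_eq_lintegral_ofReal (hfint i)
            (Filter.Eventually.of_forall (hfnn i)), hfintegral]
        simp_rw [heq]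
        rw [← ENNReal.ofReal_tsum_of_nonneg (fun i => mul_nonneg hc.le (sq_nonneg _))
          (hsum.mul_left c)]
        exact ENNReal.ofReal_lt_top
      refine ⟨hgmeas.aestronglyMeasurable, ?_⟩
      rw [hasFiniteIntegral_iff_ofReal (Filter.Eventually.of_forall fun x => sq_nonneg _)]
      calc ∫⁻ x, ENNReal.ofReal (‖R (ψ x)‖ ^ 2) ∂μ = ∫⁻ x, G x ∂μ := by
            simp_rw [hGg]
        _ < ⊤ := hGlint
  -- assemble
  have hiff1 : Integrable (fun x => (inner ℂ (ψ x) (B (c⁻¹ • ψ x)) : ℂ).re) μ ↔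
      Integrable (fun x => ‖R (ψ x)‖ ^ 2) μ := by
    simp_rw [hint_eq]
    constructor
    · intro h
      have := h.const_mul c
      simpa [← mul_assoc, mul_inv_cancel₀ hc.ne'] using this
    · intro h
      exact h.const_mul c⁻¹
  rw [hiff1, claimA]
  constructor
  · intro hsum
    exact ⟨R, R, by rw [← hRR]; rfl, hsum, hsum⟩
  · rintro ⟨S, T, hBST, hS, hT⟩
    have hS' : Summable (fun i => ‖(adjoint S) (e i)‖ ^ 2) := my_adjoint_hs e S hS
    have hbound : ∀ i, ‖R (e i)‖ ^ 2 ≤ (‖(adjoint S) (e i)‖ ^ 2 + ‖T (e i)‖ ^ 2) / 2 := by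
      intro i
      have h1 : ‖R (e i)‖ ^ 2 = (inner ℂ (e i) (B (e i)) : ℂ).re := (hpt (e i)).symm
      have h2 : (inner ℂ (e i) (B (e i)) : ℂ) = inner ℂ ((adjoint S) (e i)) (T (e i)) := by
        rw [hBST, comp_apply, adjoint_inner_left]
      have h3 : (inner ℂ ((adjoint S) (e i)) (T (e i)) : ℂ).re
          ≤ ‖(adjoint S) (e i)‖ * ‖T (e i)‖ := by
        calc (inner ℂ ((adjoint S) (e i)) (T (e i)) : ℂ).re
            ≤ ‖(inner ℂ ((adjoint S) (e i)) (T (e i)) : ℂ)‖ := Complex.re_le_norm _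
          _ ≤ ‖(adjoint S) (e i)‖ * ‖T (e i)‖ := norm_inner_le_norm _ _
      rw [h1, h2]
      nlinarith [sq_nonneg (‖(adjoint S) (e i)‖ - ‖T (e i)‖)]
    exact Summable.of_nonneg_of_le (fun i => sq_nonneg _) hbound ((hS'.add hT).div_const 2)
end

section
/- Star product via frames of Hilbert-Schmidt operators: let {T_y}_{y∈Y} be a frame in the Hilbert space B₂(H) of Hilbert-Schmidt operators, with dual frame {T^y}, frame transform D(Â)(y) = ⟨T_y, Â⟩_HS. Then for all Hilbert-Schmidt operators A, B, the function D(AB) satisfies D(AB)(y) = ∫_Y ∫_Y κ(y, y₁, y₂) D(A)(y₁) D(B)(y₂) dν(y₁)dν(y₂) for ν-a.a. y, where κ(y, y₁, y₂) = tr(T_y* T^{y₁} T^{y₂}). -/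
open MeasureTheory ContinuousLinearMap

/-- The Hilbert–Schmidt inner product `⟨A, B⟩_HS = tr(A* B) = ∑ᵢ ⟨A eᵢ, B eᵢ⟩`, computed
with respect to a Hilbert basis `e`. -/
noncomputable def hsInner {H : Type*} [NormedAddCommGroup H] [InnerProductSpace ℂ H]
    {ι : Type*} (e : HilbertBasis ι ℂ H) (A B : H →L[ℂ] H) : ℂ :=
  ∑' i, (inner ℂ (A (e i)) (B (e i)) : ℂ)

section Helpers

variable {H : Type*} [NormedAddCommGroup H] [InnerProductSpace ℂ H] [CompleteSpace H]
  {ι : Type*} (e : HilbertBasis ι ℂ H)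

private lemma parseval_hasSum (x : H) :
    HasSum (fun i => ‖(inner ℂ x (e i) : ℂ)‖ ^ 2) (‖x‖ ^ 2) := by
  have h := e.hasSum_inner_mul_inner x x
  have h1 : ∀ i, (inner ℂ x (e i) : ℂ) * (inner ℂ (e i) x : ℂ)
      = ((‖(inner ℂ x (e i) : ℂ)‖ ^ 2 : ℝ) : ℂ) := by
    intro i
    rw [← inner_conj_symm (e i) x, Complex.mul_conj']
    norm_cast
  have h2 : (inner ℂ x x : ℂ) = ((‖x‖ ^ 2 : ℝ) : ℂ) := by
    rw [inner_self_eq_norm_sq_to_K]; norm_cast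
  rw [funext h1, h2] at h
  exact Complex.hasSum_ofReal.mp h

private lemma summable_sq_inner {S : H →L[ℂ] H}
    (hS : Summable fun i => ‖S (e i)‖ ^ 2) :
    Summable fun p : ι × ι => ‖(inner ℂ (S (e p.1)) (e p.2) : ℂ)‖ ^ 2 := by
  refine (summable_prod_of_nonneg (fun p => by positivity)).mpr ⟨?_, ?_⟩
  · exact fun i => (parseval_hasSum e (S (e i))).summable
  · exact hS.congr fun i => ((parseval_hasSum e (S (e i))).tsum_eq).symm

set_option maxHeartbeats 2000000 in
private lemma summable_double {S R : H →L[ℂ] H}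
    (hS : Summable fun i => ‖S (e i)‖ ^ 2) (hR : Summable fun i => ‖R (e i)‖ ^ 2) :
    Summable fun p : ι × ι =>
      (inner ℂ (S (e p.1)) (e p.2) : ℂ) * (inner ℂ (e p.2) (R (e p.1)) : ℂ) := by
  apply Summable.of_norm
  refine Summable.of_nonneg_of_le (fun p => norm_nonneg _) (fun p => ?_)
    (((summable_sq_inner e hS).add (summable_sq_inner e hR)).div_const 2)
  rw [norm_mul, norm_inner_symm (e p.2)]
  nlinarith [sq_nonneg (‖(inner ℂ (S (e p.1)) (e p.2) : ℂ)‖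
    - ‖(inner ℂ (R (e p.1)) (e p.2) : ℂ)‖), norm_nonneg (inner ℂ (S (e p.1)) (e p.2) : ℂ),
    norm_nonneg (inner ℂ (R (e p.1)) (e p.2) : ℂ)]

private lemma hsInner_cyclic {S R : H →L[ℂ] H}
    (hS : Summable fun i => ‖S (e i)‖ ^ 2) (hR : Summable fun i => ‖R (e i)‖ ^ 2) :
    hsInner e S R = hsInner e (adjoint R) (adjoint S) := by
  have hsum := summable_double e hS hR
  calc hsInner e S R
      = ∑' i, ∑' j, (inner ℂ (S (e i)) (e j) : ℂ) * (inner ℂ (e j) (R (e i)) : ℂ) :=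
        tsum_congr fun i => (e.tsum_inner_mul_inner _ _).symm
    _ = ∑' j, ∑' i, (inner ℂ (S (e i)) (e j) : ℂ) * (inner ℂ (e j) (R (e i)) : ℂ) :=
        (Summable.tsum_comm (by exact hsum)).symm
    _ = hsInner e (adjoint R) (adjoint S) := by
        refine tsum_congr fun j => ?_
        rw [show (inner ℂ ((adjoint R) (e j)) ((adjoint S) (e j)) : ℂ)
            = ∑' i, (inner ℂ ((adjoint R) (e j)) (e i) : ℂ) * (inner ℂ (e i) ((adjoint S) (e j)) : ℂ)
            from (e.tsum_inner_mul_inner _ _).symm]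
        refine tsum_congr fun i => ?_
        rw [adjoint_inner_left, adjoint_inner_right, mul_comm]

set_option maxHeartbeats 2000000 in
private lemma adjoint_summable {S : H →L[ℂ] H}
    (hS : Summable fun i => ‖S (e i)‖ ^ 2) :
    Summable fun i => ‖(adjoint S) (e i)‖ ^ 2 := by
  have h2 : Summable fun p : ι × ι => ‖(inner ℂ (S (e p.2)) (e p.1) : ℂ)‖ ^ 2 :=
    (summable_sq_inner e hS).prod_symm
  have h3 := ((summable_prod_of_nonneg (f := fun p : ι × ι =>
    ‖(inner ℂ (S (e p.2)) (e p.1) : ℂ)‖ ^ 2) (fun p => by positivity)).mp h2).2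
  refine h3.congr fun j => ?_
  rw [← (parseval_hasSum e ((adjoint S) (e j))).tsum_eq]
  refine tsum_congr fun i => ?_
  rw [show (inner ℂ ((adjoint S) (e j)) (e i) : ℂ) = inner ℂ (e j) (S (e i)) from
    adjoint_inner_left S (e i) (e j), norm_inner_symm]

private lemma comp_summable (S : H →L[ℂ] H) {R : H →L[ℂ] H}
    (hR : Summable fun i => ‖R (e i)‖ ^ 2) :
    Summable fun i => ‖(S.comp R) (e i)‖ ^ 2 := by
  refine Summable.of_nonneg_of_le (fun i => by positivity) (fun i => ?_)
    (hR.mul_left (‖S‖ ^ 2))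
  calc ‖(S.comp R) (e i)‖ ^ 2 ≤ (‖S‖ * ‖R (e i)‖) ^ 2 := by
        have := S.le_opNorm (R (e i))
        have h0 : (0:ℝ) ≤ ‖(S.comp R) (e i)‖ := norm_nonneg _
        simp only [comp_apply] at *
        nlinarith
    _ = ‖S‖ ^ 2 * ‖R (e i)‖ ^ 2 := mul_pow _ _ _

private lemma hs1 (C A B : H →L[ℂ] H) :
    hsInner e C (A.comp B) = hsInner e ((adjoint A).comp C) B :=
  tsum_congr fun i => by
    simp only [comp_apply]
    rw [adjoint_inner_left]

private lemma hs2 (P Q R : H →L[ℂ] H) :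
    hsInner e (P.comp Q) R = hsInner e Q ((adjoint P).comp R) :=
  tsum_congr fun i => by
    simp only [comp_apply]
    rw [adjoint_inner_right]

end Helpers

set_option maxHeartbeats 2000000 in
/-- star product via frames of Hilbert–Schmidt operators. Let
`{T_y}_{y∈Y}` be a frame in `B₂(H)` with dual frame `{T^y}` (so that the weak
reconstruction formula `⟨C, A⟩_HS = ∫ ⟨T_y, A⟩_HS ⟨C, T^y⟩_HS dν(y)` holds) and frame
transform `D(A)(y) = ⟨T_y, A⟩_HS`. Then for all Hilbert–Schmidt `A, B`, for ν-a.a. `y`,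
`D(AB)(y)` equals the double integral of `κ(y,y₁,y₂) D(A)(y₁) D(B)(y₂)`, in either order
of integration, where `κ(y,y₁,y₂) = tr(T_y* T^{y₁} T^{y₂})`. -/
theorem star_product_kernel_formula
    {H : Type*} [NormedAddCommGroup H] [InnerProductSpace ℂ H] [CompleteSpace H]
    [TopologicalSpace.SeparableSpace H]
    {ι : Type*} (e : HilbertBasis ι ℂ H)
    {Y : Type*} [MeasurableSpace Y] (ν : Measure Y)
    (T Td : Y → (H →L[ℂ] H))
    (hT : ∀ y, Summable fun i => ‖T y (e i)‖ ^ 2)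
    (hTd : ∀ y, Summable fun i => ‖Td y (e i)‖ ^ 2)
    -- weak reconstruction formula expressing that `{T_y}` is a frame in `B₂(H)`
    -- with dual frame `{T^y} = {Td y}`:
    (hrec : ∀ A C : H →L[ℂ] H,
      (Summable fun i => ‖A (e i)‖ ^ 2) → (Summable fun i => ‖C (e i)‖ ^ 2) →
      hsInner e C A = ∫ y, hsInner e (T y) A * hsInner e C (Td y) ∂ν)
    (A B : H →L[ℂ] H)
    (hA : Summable fun i => ‖A (e i)‖ ^ 2) (hB : Summable fun i => ‖B (e i)‖ ^ 2) :
    ∀ᵐ y ∂ν,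
      hsInner e (T y) (A.comp B) =
        (∫ y₁, ∫ y₂, hsInner e (T y) ((Td y₁).comp (Td y₂)) *
          (hsInner e (T y₁) A * hsInner e (T y₂) B) ∂ν ∂ν) ∧
      hsInner e (T y) (A.comp B) =
        (∫ y₂, ∫ y₁, hsInner e (T y) ((Td y₁).comp (Td y₂)) *
          (hsInner e (T y₁) A * hsInner e (T y₂) B) ∂ν ∂ν) := by
  -- the kernel identity, used repeatedly
  have kappa : ∀ y y₁ y₂, hsInner e ((adjoint (Td y₁)).comp (T y)) (Td y₂)
      = hsInner e (T y) ((Td y₁).comp (Td y₂)) := fun y y₁ y₂ => (hs1 e _ _ _).symm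
  refine Filter.Eventually.of_forall fun y => ⟨?_, ?_⟩
  · -- first order: integrate over y₁ outside
    have e1 : hsInner e (T y) (A.comp B) = hsInner e ((T y).comp (adjoint B)) A := by
      rw [hs1 e (T y) A B,
        hsInner_cyclic e (comp_summable e _ (hT y)) hB,
        adjoint_comp, adjoint_adjoint, ← hs2]
    rw [e1, hrec A _ hA (comp_summable e _ (adjoint_summable e hB))]
    refine integral_congr_ae (Filter.Eventually.of_forall fun y₁ => ?_)
    beta_reduce
    have e2 : hsInner e ((T y).comp (adjoint B)) (Td y₁)
        = hsInner e ((adjoint (Td y₁)).comp (T y)) B := by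
      rw [hs2, hsInner_cyclic e (adjoint_summable e hB) (comp_summable e _ (hTd y₁)),
        adjoint_comp, adjoint_adjoint, adjoint_adjoint]
    rw [e2, hrec B _ hB (comp_summable e _ (hT y)), ← integral_const_mul]
    refine integral_congr_ae (Filter.Eventually.of_forall fun y₂ => ?_)
    beta_reduce
    rw [kappa y y₁ y₂]
    ring
  · -- second order: integrate over y₂ outside
    rw [hs1 e (T y) A B, hrec B _ hB (comp_summable e _ (hT y))]
    refine integral_congr_ae (Filter.Eventually.of_forall fun y₂ => ?_)
    beta_reduce
    have e2 : hsInner e ((adjoint A).comp (T y)) (Td y₂)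
        = hsInner e ((T y).comp (adjoint (Td y₂))) A := by
      rw [hsInner_cyclic e (comp_summable e _ (hT y)) (hTd y₂),
        adjoint_comp, adjoint_adjoint, ← hs2]
    rw [e2, hrec A _ hA (comp_summable e _ (adjoint_summable e (hTd y₂))), ← integral_const_mul]
    refine integral_congr_ae (Filter.Eventually.of_forall fun y₁ => ?_)
    beta_reduce
    have e3 : hsInner e ((T y).comp (adjoint (Td y₂))) (Td y₁)
        = hsInner e ((adjoint (Td y₁)).comp (T y)) (Td y₂) := by
      rw [hs2, hsInner_cyclic e (adjoint_summable e (hTd y₂))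
        (comp_summable e _ (hTd y₁)), adjoint_comp, adjoint_adjoint, adjoint_adjoint]
    rw [e3, kappa y y₁ y₂]
    ring
end

section
/- Let {T_y}_{y∈Y} be a frame in B₂(H) with dual frame {T^y} and frame transform D. For every bounded operator A on H and every Hilbert-Schmidt operator B, D(AB)(y) = ∫_Y χ^L(A; y, y') D(B)(y') dν(y') for ν-a.a. y, where χ^L(A; y, y') = ⟨T_y, A T^{y'}⟩_HS; similarly D(BA)(y) = ∫_Y χ^R(A; y, y') D(B)(y') dν(y') with χ^R(A; y, y') = ⟨T_y, T^{y'}A⟩_HS. -/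
open MeasureTheory ContinuousLinearMap

section aux

set_option linter.unusedSectionVars false

variable {H : Type*} [NormedAddCommGroup H] [InnerProductSpace ℂ H] [CompleteSpace H]
  {ι : Type*} (e : HilbertBasis ι ℂ H)

local notation "⟪" x ", " y "⟫" => (inner ℂ x y : ℂ)

lemma hs_norm_symm (u v : H) : ‖⟪u, v⟫‖ = ‖⟪v, u⟫‖ := by
  rw [← inner_conj_symm v u, RCLike.norm_conj]

lemma hs_parseval (x : H) : HasSum (fun j => ‖⟪e j, x⟫‖ ^ 2) (‖x‖ ^ 2) := by
  have h := (e.hasSum_inner_mul_inner x x).mapL Complex.reCLM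
  have h2 : (fun j => Complex.reCLM (⟪x, e j⟫ * ⟪e j, x⟫)) = fun j => ‖⟪e j, x⟫‖ ^ 2 := by
    funext j
    rw [← inner_conj_symm x (e j), RCLike.conj_mul]
    simp [← Complex.ofReal_pow]
  rw [h2] at h
  have h3 : Complex.reCLM ⟪x, x⟫ = ‖x‖ ^ 2 := by
    simpa using inner_self_eq_norm_sq (𝕜 := ℂ) x
  rwa [h3] at h

lemma hs_comp_left {X : H →L[ℂ] H} (hX : Summable fun i => ‖X (e i)‖ ^ 2)
    (A : H →L[ℂ] H) : Summable fun i => ‖(A.comp X) (e i)‖ ^ 2 := by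
  refine Summable.of_nonneg_of_le (fun i => by positivity) (fun i => ?_) (hX.mul_left (‖A‖ ^ 2))
  calc ‖(A.comp X) (e i)‖ ^ 2 ≤ (‖A‖ * ‖X (e i)‖) ^ 2 := by
        apply pow_le_pow_left₀ (norm_nonneg _) (A.le_opNorm _)
    _ = ‖A‖ ^ 2 * ‖X (e i)‖ ^ 2 := by ring

lemma hs_prod {X : H →L[ℂ] H} (hX : Summable fun i => ‖X (e i)‖ ^ 2) :
    Summable fun p : ι × ι => ‖⟪e p.2, X (e p.1)⟫‖ ^ 2 := by
  have h := summable_prod_of_nonneg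
    (f := fun p : ι × ι => ‖⟪e p.2, X (e p.1)⟫‖ ^ 2) (fun p => sq_nonneg _)
  refine h.mpr ⟨fun i => ?_, ?_⟩
  · exact (hs_parseval e (X (e i))).summable
  · exact hX.congr fun i => ((hs_parseval e (X (e i))).tsum_eq).symm

lemma hs_adjoint {X : H →L[ℂ] H} (hX : Summable fun i => ‖X (e i)‖ ^ 2) :
    Summable fun j => ‖(adjoint X) (e j)‖ ^ 2 := by
  have h := ((summable_prod_of_nonneg
    (f := fun p : ι × ι => ‖⟪e p.swap.2, X (e p.swap.1)⟫‖ ^ 2)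
    (fun p => sq_nonneg _)).mp ((hs_prod e hX).prod_symm)).2
  refine h.congr fun j => ?_
  have key : ∀ i : ι, ‖⟪e ((j, i).swap.2), X (e ((j, i).swap.1))⟫‖ ^ 2
      = ‖⟪e i, (adjoint X) (e j)⟫‖ ^ 2 := by
    intro i
    simp only [Prod.swap_prod_mk]
    rw [hs_norm_symm (e i), adjoint_inner_left]
  rw [tsum_congr key]
  exact (hs_parseval e ((adjoint X) (e j))).tsum_eq

lemma hs_comp_right {X : H →L[ℂ] H} (hX : Summable fun i => ‖X (e i)‖ ^ 2)
    (A : H →L[ℂ] H) : Summable fun i => ‖(X.comp A) (e i)‖ ^ 2 := by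
  have hEq : X.comp A = adjoint ((adjoint A).comp (adjoint X)) := by
    rw [adjoint_comp, adjoint_adjoint, adjoint_adjoint]
  rw [hEq]
  exact hs_adjoint e (hs_comp_left e (hs_adjoint e hX) (adjoint A))

lemma hsInner_left_move (X Y A : H →L[ℂ] H) :
    hsInner e X (A.comp Y) = hsInner e ((adjoint A).comp X) Y :=
  tsum_congr fun i => by
    simp only [coe_comp', Function.comp_apply]
    rw [adjoint_inner_left]

lemma hsInner_adjoint {X Z : H →L[ℂ] H} (hX : Summable fun i => ‖X (e i)‖ ^ 2)
    (hZ : Summable fun i => ‖Z (e i)‖ ^ 2) :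
    hsInner e X Z = hsInner e (adjoint Z) (adjoint X) := by
  set f : ι × ι → ℂ := fun p => ⟪X (e p.1), e p.2⟫ * ⟪e p.2, Z (e p.1)⟫ with hf
  have hsum : Summable f := by
    have h1 := hs_prod e hX
    have h2 := hs_prod e hZ
    refine Summable.of_norm (Summable.of_nonneg_of_le (fun p => norm_nonneg _)
      (fun p => ?_) ((h1.add h2).mul_left (1/2)))
    simp only [hf, norm_mul]
    rw [hs_norm_symm (X (e p.1)) (e p.2)]
    set a := ‖⟪e p.2, X (e p.1)⟫‖ with ha'
    set b := ‖⟪e p.2, Z (e p.1)⟫‖ with hb'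
    have ha : 0 ≤ a := norm_nonneg _
    have hb : 0 ≤ b := norm_nonneg _
    nlinarith [sq_nonneg (a - b)]
  have lhs : hsInner e X Z = ∑' p, f p := by
    rw [Summable.tsum_prod hsum]
    exact tsum_congr fun i => (e.tsum_inner_mul_inner _ _).symm
  have rhs : ∑' p, f p = hsInner e (adjoint Z) (adjoint X) := by
    rw [← (Equiv.prodComm ι ι).tsum_eq f]
    simp only [Equiv.prodComm_apply]
    rw [Summable.tsum_prod hsum.prod_symm]
    refine tsum_congr fun j => ?_
    have key : ∀ i : ι, f ((j, i).swap) =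
        ⟪(adjoint Z) (e j), e i⟫ * ⟪e i, (adjoint X) (e j)⟫ := by
      intro i
      simp only [hf, Prod.swap_prod_mk]
      rw [← adjoint_inner_right (A := X), ← adjoint_inner_left (A := Z), mul_comm]
    rw [tsum_congr key]
    exact e.tsum_inner_mul_inner _ _
  rw [lhs, rhs]

lemma hsInner_right_move {X Y : H →L[ℂ] H} (hX : Summable fun i => ‖X (e i)‖ ^ 2)
    (hY : Summable fun i => ‖Y (e i)‖ ^ 2) (A : H →L[ℂ] H) :
    hsInner e X (Y.comp A) = hsInner e (X.comp (adjoint A)) Y := by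
  rw [hsInner_adjoint e hX (hs_comp_right e hY A),
    hsInner_adjoint e (hs_comp_right e hX (adjoint A)) hY,
    adjoint_comp, adjoint_comp, adjoint_adjoint,
    ← hsInner_left_move e (adjoint Y) (adjoint X) A]

end aux

/-- For a frame `{T_y}` in `B₂(H)` with dual frame `{T^y}` and frame
transform `D`, for every bounded `A` and Hilbert–Schmidt `B`:
`D(AB)(y) = ∫ χ^L(A; y, y') D(B)(y') dν(y')` with `χ^L(A; y, y') = ⟨T_y, A T^{y'}⟩_HS`,
and `D(BA)(y) = ∫ χ^R(A; y, y') D(B)(y') dν(y')` with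
`χ^R(A; y, y') = ⟨T_y, T^{y'} A⟩_HS`, for ν-a.a. `y`. -/
theorem left_right_kernel_formula
    {H : Type*} [NormedAddCommGroup H] [InnerProductSpace ℂ H] [CompleteSpace H]
    [TopologicalSpace.SeparableSpace H]
    {ι : Type*} (e : HilbertBasis ι ℂ H)
    {Y : Type*} [MeasurableSpace Y] (ν : Measure Y)
    (T Td : Y → (H →L[ℂ] H))
    (hT : ∀ y, Summable fun i => ‖T y (e i)‖ ^ 2)
    (hTd : ∀ y, Summable fun i => ‖Td y (e i)‖ ^ 2)
    (hrec : ∀ A C : H →L[ℂ] H,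
      (Summable fun i => ‖A (e i)‖ ^ 2) → (Summable fun i => ‖C (e i)‖ ^ 2) →
      hsInner e C A = ∫ y, hsInner e (T y) A * hsInner e C (Td y) ∂ν)
    (A : H →L[ℂ] H) (B : H →L[ℂ] H)
    (hB : Summable fun i => ‖B (e i)‖ ^ 2) :
    ∀ᵐ y ∂ν,
      hsInner e (T y) (A.comp B) =
        (∫ y', hsInner e (T y) (A.comp (Td y')) * hsInner e (T y') B ∂ν) ∧
      hsInner e (T y) (B.comp A) =
        (∫ y', hsInner e (T y) ((Td y').comp A) * hsInner e (T y') B ∂ν) := by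
  refine Filter.Eventually.of_forall fun y => ⟨?_, ?_⟩
  · rw [hsInner_left_move e (T y) B A,
      hrec B ((adjoint A).comp (T y)) hB (hs_comp_left e (hT y) (adjoint A))]
    refine integral_congr_ae (Filter.Eventually.of_forall fun y' => ?_)
    beta_reduce
    rw [← hsInner_left_move e (T y) (Td y') A, mul_comm]
  · rw [hsInner_right_move e (hT y) hB A,
      hrec B ((T y).comp (adjoint A)) hB (hs_comp_right e (hT y) (adjoint A))]
    refine integral_congr_ae (Filter.Eventually.of_forall fun y' => ?_)
    beta_reduce
    rw [← hsInner_right_move e (hT y) (hTd y') A, mul_comm]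
end

section
/- Multiplicativity of left kernels: for bounded operators A₁, A₂ on H and a frame {T_y} in B₂(H) with dual frame {T^y}, the kernel of the product satisfies χ^L(A₁A₂; y₁, y₂) = ∫_Y χ^L(A₁; y₁, y) χ^L(A₂; y, y₂) dν(y) for all y₁, y₂ ∈ Y. -/
open MeasureTheory ContinuousLinearMap

/-- multiplicativity of left kernels. For bounded operators `A₁, A₂`
on `H` and a frame `{T_y}` in `B₂(H)` with dual frame `{T^y}` (weak resolution of the
identity), the left kernels `χ^L(A; y, y') = ⟨T_y, A T^{y'}⟩_HS` satisfy
`χ^L(A₁A₂; y₁, y₂) = ∫ χ^L(A₁; y₁, y) χ^L(A₂; y, y₂) dν(y)` for all `y₁, y₂`. -/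
theorem left_kernel_multiplicative
    {H : Type*} [NormedAddCommGroup H] [InnerProductSpace ℂ H] [CompleteSpace H]
    [TopologicalSpace.SeparableSpace H]
    {ι : Type*} (e : HilbertBasis ι ℂ H)
    {Y : Type*} [MeasurableSpace Y] (ν : Measure Y)
    (T Td : Y → (H →L[ℂ] H))
    (hT : ∀ y, Summable fun i => ‖T y (e i)‖ ^ 2)
    (hTd : ∀ y, Summable fun i => ‖Td y (e i)‖ ^ 2)
    -- weak reconstruction formula (resolution of the identity `I = ∫ |T^y⟩⟨T_y| dν`):
    (hrec : ∀ A C : H →L[ℂ] H,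
      (Summable fun i => ‖A (e i)‖ ^ 2) → (Summable fun i => ‖C (e i)‖ ^ 2) →
      hsInner e C A = ∫ y, hsInner e (T y) A * hsInner e C (Td y) ∂ν)
    (A₁ A₂ : H →L[ℂ] H) :
    ∀ y₁ y₂ : Y,
      hsInner e (T y₁) ((A₁.comp A₂).comp (Td y₂)) =
        ∫ y, hsInner e (T y₁) (A₁.comp (Td y)) * hsInner e (T y) (A₂.comp (Td y₂)) ∂ν := by
  intro y₁ y₂
  -- summability of composites
  have hcomp : ∀ (A B : H →L[ℂ] H), (Summable fun i => ‖B (e i)‖ ^ 2) →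
      Summable fun i => ‖(A.comp B) (e i)‖ ^ 2 := by
    intro A B hB
    refine Summable.of_nonneg_of_le (fun i => by positivity)
      (fun i => ?_) (hB.mul_left (‖A‖ ^ 2))
    have h1 : ‖A (B (e i))‖ ≤ ‖A‖ * ‖B (e i)‖ := A.le_opNorm _
    calc ‖(A.comp B) (e i)‖ ^ 2 ≤ (‖A‖ * ‖B (e i)‖) ^ 2 := by
          apply pow_le_pow_left₀ (norm_nonneg _) h1
      _ = ‖A‖ ^ 2 * ‖B (e i)‖ ^ 2 := by ring
  -- adjoint swap for hsInner
  have hadj : ∀ (A B C : H →L[ℂ] H),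
      hsInner e ((adjoint A).comp C) B = hsInner e C (A.comp B) := by
    intro A B C
    unfold hsInner
    congr 1
    funext i
    simp [ContinuousLinearMap.adjoint_inner_left]
  have key := hrec (A₂.comp (Td y₂)) ((adjoint A₁).comp (T y₁))
    (hcomp A₂ (Td y₂) (hTd y₂)) (hcomp (adjoint A₁) (T y₁) (hT y₁))
  rw [hadj A₁ (A₂.comp (Td y₂)) (T y₁)] at key
  rw [← ContinuousLinearMap.comp_assoc] at key
  rw [key]
  congr 1
  funext y
  rw [hadj A₁ (Td y) (T y₁)]
  ring
end

section
/- First trace formula for square integrable representations: let U : G → U(H) be a square integrable projective representation of a unimodular locally compact second countable group G with Haar measure μ_G normalized in agreement with U (so the Duflo–Moore operator is the identity). Then for every trace class operator A on H and every ψ, φ ∈ H: tr(A)·⟨ψ, φ⟩ = ∫_G ⟨U(g)ψ, A U(g)φ⟩ dμ_G(g). -/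
open MeasureTheory ContinuousLinearMap
open scoped ENNReal NNReal ComplexConjugate

set_option linter.unusedSectionVars false

section aux
variable {H : Type*} [NormedAddCommGroup H] [InnerProductSpace ℂ H] [CompleteSpace H]

/-- Parseval: `HasSum` of squared coefficients. -/
lemma aux_hasSum_sq {ι : Type*} (e : HilbertBasis ι ℂ H) (x : H) :
    HasSum (fun i => ‖(inner ℂ (e i) x : ℂ)‖ ^ 2) (‖x‖ ^ 2) := by
  have h := Complex.hasSum_re (e.hasSum_inner_mul_inner x x)
  have h1 : (fun i => ((inner ℂ x (e i) : ℂ) * (inner ℂ (e i) x : ℂ)).re)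
      = fun i => ‖(inner ℂ (e i) x : ℂ)‖ ^ 2 := by
    funext i
    rw [← inner_conj_symm x (e i), RCLike.conj_mul]
    norm_cast
  have h2 : ((inner ℂ x x : ℂ)).re = ‖x‖ ^ 2 := by
    rw [inner_self_eq_norm_sq_to_K]; norm_cast
  rwa [h1, h2] at h

/-- ENNReal Parseval. -/
lemma aux_tsum_sq_ennreal {ι : Type*} (e : HilbertBasis ι ℂ H) (x : H) :
    ∑' i, (‖(inner ℂ (e i) x : ℂ)‖₊ ^ 2 : ℝ≥0∞) = (‖x‖₊ ^ 2 : ℝ≥0∞) := by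
  have h := aux_hasSum_sq e x
  have : ENNReal.ofReal (‖x‖ ^ 2) = ∑' i, ENNReal.ofReal (‖(inner ℂ (e i) x : ℂ)‖ ^ 2) := by
    rw [← h.tsum_eq]
    exact ENNReal.ofReal_tsum_of_nonneg (fun i => by positivity) h.summable
  have key : ∀ (y : ℝ) (h0 : 0 ≤ y), ENNReal.ofReal (y ^ 2) = (‖y‖₊ : ℝ≥0∞) ^ 2 := by
    intro y h0
    rw [ENNReal.ofReal_pow h0, ← enorm_eq_nnnorm, ← ofReal_norm, Real.norm_of_nonneg h0]
  calc ∑' i, (‖(inner ℂ (e i) x : ℂ)‖₊ ^ 2 : ℝ≥0∞)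
      = ∑' i, ENNReal.ofReal (‖(inner ℂ (e i) x : ℂ)‖ ^ 2) := by
        refine tsum_congr fun i => ?_
        rw [key _ (norm_nonneg _), nnnorm_norm]
    _ = ENNReal.ofReal (‖x‖ ^ 2) := this.symm
    _ = (‖x‖₊ ^ 2 : ℝ≥0∞) := by rw [key _ (norm_nonneg _), nnnorm_norm]

lemma aux_tsum_sq_op {ι : Type*} (e : HilbertBasis ι ℂ H) (T : H →L[ℂ] H)
    (hT : Summable fun i => ‖T (e i)‖ ^ 2) :
    ∑' i, (‖T (e i)‖₊ ^ 2 : ℝ≥0∞) ≠ ∞ := by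
  have : Summable fun i => (‖T (e i)‖₊ ^ 2 : ℝ≥0) := by
    rw [← NNReal.summable_coe]
    simpa using hT
  simpa only [ENNReal.coe_pow] using ENNReal.tsum_coe_ne_top_iff_summable.2 this

/-- Hilbert–Schmidt property passes to the adjoint. -/
lemma aux_hs_adjoint {ι : Type*} (e : HilbertBasis ι ℂ H) (T : H →L[ℂ] H)
    (hT : Summable fun i => ‖T (e i)‖ ^ 2) :
    Summable fun i => ‖(ContinuousLinearMap.adjoint T) (e i)‖ ^ 2 := by
  set Td := ContinuousLinearMap.adjoint T with hTd
  have key : ∑' i, (‖Td (e i)‖₊ ^ 2 : ℝ≥0∞) = ∑' j, (‖T (e j)‖₊ ^ 2 : ℝ≥0∞) := by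
    calc ∑' i, (‖Td (e i)‖₊ ^ 2 : ℝ≥0∞)
        = ∑' i, ∑' j, (‖(inner ℂ (e j) (Td (e i)) : ℂ)‖₊ ^ 2 : ℝ≥0∞) := by
          refine tsum_congr fun i => ?_
          rw [aux_tsum_sq_ennreal e (Td (e i))]
      _ = ∑' j, ∑' i, (‖(inner ℂ (e j) (Td (e i)) : ℂ)‖₊ ^ 2 : ℝ≥0∞) := ENNReal.tsum_comm
      _ = ∑' j, ∑' i, (‖(inner ℂ (e i) (T (e j)) : ℂ)‖₊ ^ 2 : ℝ≥0∞) := by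
          refine tsum_congr fun j => tsum_congr fun i => ?_
          rw [hTd, ContinuousLinearMap.adjoint_inner_right,
            ← inner_conj_symm (e i) (T (e j)), RCLike.nnnorm_conj]
      _ = ∑' j, (‖T (e j)‖₊ ^ 2 : ℝ≥0∞) := by
          refine tsum_congr fun j => ?_
          rw [aux_tsum_sq_ennreal e (T (e j))]
  have hfin : ∑' i, (‖Td (e i)‖₊ ^ 2 : ℝ≥0∞) ≠ ∞ := by
    rw [key]; exact aux_tsum_sq_op e T hT
  have : Summable fun i => (‖Td (e i)‖₊ ^ 2 : ℝ≥0) := by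
    apply ENNReal.tsum_coe_ne_top_iff_summable.1
    simpa only [ENNReal.coe_pow] using hfin
  rw [← NNReal.summable_coe] at this
  simpa using this

lemma aux_countable [TopologicalSpace.SeparableSpace H] {ι : Type*} (e : HilbertBasis ι ℂ H) :
    Countable ι := by
  apply Pairwise.countable_of_isOpen_disjoint (s := fun i => Metric.ball (e i) (1/2))
  · intro i j hij
    rw [Function.onFun, Set.disjoint_left]
    intro x hx hx'
    rw [Metric.mem_ball] at hx hx'
    have hd : dist (e i) (e j) < 1 := by
      have := dist_triangle (e i) x (e j)
      have h1 : dist (e i) x = dist x (e i) := dist_comm _ _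
      linarith
    have hsq : dist (e i) (e j) ^ 2 = 2 := by
      rw [dist_eq_norm, @norm_sub_sq ℂ]
      have h0 : (inner ℂ (e i) (e j) : ℂ) = 0 := e.orthonormal.2 hij
      have h1 : ‖(e i : H)‖ = 1 := e.orthonormal.1 i
      have h2 : ‖(e j : H)‖ = 1 := e.orthonormal.1 j
      rw [h0, h1, h2]
      norm_num
    nlinarith [dist_nonneg (x := e i) (y := e j)]
  · intro i; exact Metric.isOpen_ball
  · intro i; exact ⟨e i, by simp⟩

end aux

/-- first trace formula for square integrable representations. Let `U`
be a square integrable projective unitary representation of a unimodular l.c.s.c. group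
`G` on a separable Hilbert space `H`, with Haar measure `μG` normalized in agreement with
`U`, i.e. satisfying the orthogonality relations
`∫ ⟨φ₁, U(g)ψ₁⟩⟨U(g)ψ₂, φ₂⟩ dμG(g) = ⟨φ₁,φ₂⟩⟨ψ₂,ψ₁⟩` (Duflo–Moore operator `= I`).
Then for every trace class operator `A` (a product `B ∘ C` of Hilbert–Schmidt operators,
its trace computed in a Hilbert basis `e`) and all `ψ, φ ∈ H`:
`tr(A)·⟨ψ, φ⟩ = ∫ ⟨U(g)ψ, A U(g)φ⟩ dμG(g)`. -/
theorem first_trace_formula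
    {H : Type*} [NormedAddCommGroup H] [InnerProductSpace ℂ H] [CompleteSpace H]
    [TopologicalSpace.SeparableSpace H]
    {ι : Type*} (e : HilbertBasis ι ℂ H)
    {G : Type*} [Group G] [MeasurableSpace G] (μG : Measure G)
    [μG.IsMulLeftInvariant] [μG.IsMulRightInvariant]
    (U : G → (H →L[ℂ] H))
    -- `U` is a projective unitary representation:
    (hunit : ∀ (g : G) (x : H), ‖U g x‖ = ‖x‖)
    (hproj : ∀ g h : G, ∃ m : ℂ, ‖m‖ = 1 ∧ U (g * h) = m • (U g).comp (U h))
    (hmeas : ∀ x y : H, Measurable fun g => (inner ℂ x (U g y) : ℂ))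
    -- orthogonality relations (square integrability, Duflo–Moore operator `= I`):
    (horth : ∀ φ₁ ψ₁ φ₂ ψ₂ : H,
      ∫ g, (inner ℂ φ₁ (U g ψ₁) : ℂ) * (inner ℂ (U g ψ₂) φ₂ : ℂ) ∂μG
        = (inner ℂ φ₁ φ₂ : ℂ) * (inner ℂ ψ₂ ψ₁ : ℂ))
    -- `A` is trace class: a product of two Hilbert–Schmidt operators:
    (A B C : H →L[ℂ] H) (hA : A = B.comp C)
    (hB : Summable fun i => ‖B (e i)‖ ^ 2) (hC : Summable fun i => ‖C (e i)‖ ^ 2)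
    (ψ φ : H) :
    (∑' i, (inner ℂ (e i) (A (e i)) : ℂ)) * (inner ℂ ψ φ : ℂ)
      = ∫ g, (inner ℂ (U g ψ) (A (U g φ)) : ℂ) ∂μG := by
  subst hA
  have hCount : Countable ι := aux_countable e
  set Bd := ContinuousLinearMap.adjoint B with hBdd
  set Cd := ContinuousLinearMap.adjoint C with hCdd
  have hCd : Summable fun i => ‖Cd (e i)‖ ^ 2 := aux_hs_adjoint e C hC
  -- L² facts about matrix coefficients
  have hIntSq : ∀ x y : H, Integrable (fun g => ‖(inner ℂ x (U g y) : ℂ)‖ ^ 2) μG ∧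
      ∫ g, ‖(inner ℂ x (U g y) : ℂ)‖ ^ 2 ∂μG = ‖x‖ ^ 2 * ‖y‖ ^ 2 := by
    intro x y
    have h := horth x y x y
    have hptw : (fun g => (inner ℂ x (U g y) : ℂ) * (inner ℂ (U g y) x : ℂ))
        = fun g => ((‖(inner ℂ x (U g y) : ℂ)‖ ^ 2 : ℝ) : ℂ) := by
      funext g
      rw [← inner_conj_symm x (U g y), RCLike.conj_mul, RCLike.norm_conj]
      norm_cast
    rw [hptw, inner_self_eq_norm_sq_to_K, inner_self_eq_norm_sq_to_K] at h
    by_cases hI : Integrable (fun g => ‖(inner ℂ x (U g y) : ℂ)‖ ^ 2) μG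
    · refine ⟨hI, ?_⟩
      have hcast : ∫ g, ((‖(inner ℂ x (U g y) : ℂ)‖ ^ 2 : ℝ) : ℂ) ∂μG
          = ((∫ g, ‖(inner ℂ x (U g y) : ℂ)‖ ^ 2 ∂μG : ℝ) : ℂ) := integral_ofReal
      rw [hcast] at h
      simpa [← Complex.ofReal_pow, ← Complex.ofReal_mul] using congrArg Complex.re h
    · exfalso
      have h0 : ¬ Integrable (fun g => ((‖(inner ℂ x (U g y) : ℂ)‖ ^ 2 : ℝ) : ℂ)) μG :=
        fun hInt => hI (by simpa [← Complex.ofReal_pow] using hInt.re)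
      rw [integral_undef h0] at h
      have hxy : x = 0 ∨ y = 0 := by
        rcases mul_eq_zero.1 h.symm with h' | h'
        · left
          have hx0 : (‖x‖ : ℂ) = 0 := (pow_eq_zero_iff two_ne_zero).1 h'
          have : ‖x‖ = 0 := by exact_mod_cast hx0
          simpa using this
        · right
          have hy0 : (‖y‖ : ℂ) = 0 := (pow_eq_zero_iff two_ne_zero).1 h'
          have : ‖y‖ = 0 := by exact_mod_cast hy0
          simpa using this
      rcases hxy with rfl | rfl
      · exact hI (by simpa using (integrable_zero G ℝ μG))
      · exact hI (by simpa using (integrable_zero G ℝ μG))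
  -- lintegral version
  have hLint : ∀ x y : H, ∫⁻ g, ((‖(inner ℂ x (U g y) : ℂ)‖₊ : ℝ≥0∞)) ^ (2 : ℕ) ∂μG
      = ((‖x‖₊ * ‖y‖₊ : ℝ≥0) : ℝ≥0∞) ^ (2 : ℕ) := by
    intro x y
    have h := (hIntSq x y).1
    have h2 := (hIntSq x y).2
    have h3 := ofReal_integral_eq_lintegral_ofReal h (Filter.Eventually.of_forall fun g => by positivity)
    rw [h2] at h3
    have h4 : ∀ g : G, ENNReal.ofReal (‖(inner ℂ x (U g y) : ℂ)‖ ^ 2)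
        = ((‖(inner ℂ x (U g y) : ℂ)‖₊ : ℝ≥0∞)) ^ (2 : ℕ) := by
      intro g
      rw [ENNReal.ofReal_pow (norm_nonneg _), ofReal_norm, enorm_eq_nnnorm]
    calc ∫⁻ g, ((‖(inner ℂ x (U g y) : ℂ)‖₊ : ℝ≥0∞)) ^ (2 : ℕ) ∂μG
        = ∫⁻ g, ENNReal.ofReal (‖(inner ℂ x (U g y) : ℂ)‖ ^ 2) ∂μG := by
          refine lintegral_congr fun g => (h4 g).symm
      _ = ENNReal.ofReal (‖x‖ ^ 2 * ‖y‖ ^ 2) := h3.symm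
      _ = ((‖x‖₊ * ‖y‖₊ : ℝ≥0) : ℝ≥0∞) ^ (2 : ℕ) := by
          rw [← mul_pow, ENNReal.ofReal_pow (by positivity)]
          congr 1
          push_cast
          rw [ENNReal.ofReal_mul (norm_nonneg _)]
          rw [ofReal_norm, enorm_eq_nnnorm, ofReal_norm, enorm_eq_nnnorm]
  -- the summands
  set f : ι → G → ℂ := fun i g =>
    (inner ℂ (Bd (U g ψ)) (e i) : ℂ) * (inner ℂ (e i) (C (U g φ)) : ℂ) with hf
  -- measurability
  have hf_meas : ∀ i, AEStronglyMeasurable (f i) μG := by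
    intro i
    have m1 : Measurable fun g => (inner ℂ (Bd (U g ψ)) (e i) : ℂ) := by
      have : (fun g => (inner ℂ (Bd (U g ψ)) (e i) : ℂ))
          = fun g => starRingEnd ℂ ((inner ℂ (B (e i)) (U g ψ) : ℂ)) := by
        funext g
        rw [hBdd, ContinuousLinearMap.adjoint_inner_left, ← inner_conj_symm]
      rw [this]
      exact Complex.continuous_conj.measurable.comp (hmeas (B (e i)) ψ)
    have m2 : Measurable fun g => (inner ℂ (e i) (C (U g φ)) : ℂ) := by
      have : (fun g => (inner ℂ (e i) (C (U g φ)) : ℂ))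
          = fun g => (inner ℂ (Cd (e i)) (U g φ) : ℂ) := by
        funext g
        rw [hCdd, ContinuousLinearMap.adjoint_inner_left]
      rw [this]
      exact hmeas (Cd (e i)) φ
    exact (m1.mul m2).aestronglyMeasurable
  -- pointwise expansion
  have hsum : ∀ g : G, HasSum (fun i => f i g) (inner ℂ (U g ψ) ((B.comp C) (U g φ)) : ℂ) := by
    intro g
    have h := e.hasSum_inner_mul_inner (Bd (U g ψ)) (C (U g φ))
    have : (inner ℂ (Bd (U g ψ)) (C (U g φ)) : ℂ) = (inner ℂ (U g ψ) ((B.comp C) (U g φ)) : ℂ) := by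
      rw [hBdd, ContinuousLinearMap.adjoint_inner_left]
      rfl
    rwa [this] at h
  -- value of each integral
  have hfint : ∀ i, ∫ g, f i g ∂μG = (inner ℂ (Cd (e i)) (B (e i)) : ℂ) * (inner ℂ ψ φ : ℂ) := by
    intro i
    have h := horth (Cd (e i)) φ (B (e i)) ψ
    calc ∫ g, f i g ∂μG
        = ∫ g, (inner ℂ (Cd (e i)) (U g φ) : ℂ) * (inner ℂ (U g ψ) (B (e i)) : ℂ) ∂μG := by
          refine integral_congr_ae (Filter.Eventually.of_forall fun g => ?_)
          rw [hf]
          dsimp only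
          rw [hBdd, ContinuousLinearMap.adjoint_inner_left, hCdd,
            ContinuousLinearMap.adjoint_inner_left, mul_comm]
      _ = (inner ℂ (Cd (e i)) (B (e i)) : ℂ) * (inner ℂ ψ φ : ℂ) := h
  -- bound on each lintegral
  have hbound : ∀ i, ∫⁻ g, ‖f i g‖₊ ∂μG
      ≤ ((‖B (e i)‖₊ * ‖ψ‖₊ : ℝ≥0) : ℝ≥0∞) * ((‖Cd (e i)‖₊ * ‖φ‖₊ : ℝ≥0) : ℝ≥0∞) := by
    intro i
    set u : G → ℝ≥0∞ := fun g => (‖(inner ℂ (B (e i)) (U g ψ) : ℂ)‖₊ : ℝ≥0∞) with hu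
    set v : G → ℝ≥0∞ := fun g => (‖(inner ℂ (Cd (e i)) (U g φ) : ℂ)‖₊ : ℝ≥0∞) with hv
    have h2 : Real.HolderConjugate 2 2 := by constructor <;> norm_num
    have hum : AEMeasurable u μG := ((hmeas _ _).nnnorm.coe_nnreal_ennreal).aemeasurable
    have hvm : AEMeasurable v μG := ((hmeas _ _).nnnorm.coe_nnreal_ennreal).aemeasurable
    have key := ENNReal.lintegral_mul_le_Lp_mul_Lq μG h2 hum hvm
    have hfe : ∀ g, (‖f i g‖₊ : ℝ≥0∞) = (u * v) g := by
      intro g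
      have e1 : (inner ℂ (Bd (U g ψ)) (e i) : ℂ)
          = starRingEnd ℂ (inner ℂ (B (e i)) (U g ψ) : ℂ) := by
        rw [hBdd, ContinuousLinearMap.adjoint_inner_left,
          ← inner_conj_symm (U g ψ) (B (e i))]
      have e2 : (inner ℂ (e i) (C (U g φ)) : ℂ) = (inner ℂ (Cd (e i)) (U g φ) : ℂ) := by
        rw [hCdd, ContinuousLinearMap.adjoint_inner_left]
      simp only [hf, hu, hv, Pi.mul_apply, e1, e2, nnnorm_mul, RCLike.nnnorm_conj,
        ENNReal.coe_mul]
    have hrpow : ∀ x : ℝ≥0∞, (x ^ (2 : ℕ)) ^ ((1 : ℝ)/2) = x := by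
      intro x
      rw [← ENNReal.rpow_natCast x 2, ← ENNReal.rpow_mul]
      norm_num
    have hn : ∀ w : G → ℝ≥0∞, (∫⁻ g, w g ^ (2:ℝ) ∂μG) = ∫⁻ g, w g ^ (2:ℕ) ∂μG := by
      intro w
      refine lintegral_congr fun g => ?_
      rw [← ENNReal.rpow_natCast]
      norm_num
    calc ∫⁻ g, ‖f i g‖₊ ∂μG = ∫⁻ g, (u * v) g ∂μG := lintegral_congr hfe
      _ ≤ (∫⁻ g, u g ^ (2:ℝ) ∂μG) ^ ((1:ℝ)/2) * (∫⁻ g, v g ^ (2:ℝ) ∂μG) ^ ((1:ℝ)/2) := key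
      _ = ((‖B (e i)‖₊ * ‖ψ‖₊ : ℝ≥0) : ℝ≥0∞) * ((‖Cd (e i)‖₊ * ‖φ‖₊ : ℝ≥0) : ℝ≥0∞) := by
          rw [hn u, hn v, hLint (B (e i)) ψ, hLint (Cd (e i)) φ, hrpow, hrpow]
  -- the sum of the lintegrals is finite
  have hsum_fin : (∑' i, ∫⁻ g, ‖f i g‖₊ ∂μG) ≠ ∞ := by
    have hd : Summable fun i => (‖B (e i)‖₊ * ‖ψ‖₊) * (‖Cd (e i)‖₊ * ‖φ‖₊) := by
      rw [← NNReal.summable_coe]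
      push_cast
      have hdr : Summable fun i => ‖ψ‖ * ‖φ‖ * (‖B (e i)‖ * ‖Cd (e i)‖) := by
        apply Summable.mul_left
        apply Summable.of_nonneg_of_le (fun i => by positivity)
          (fun i => ?_) ((hB.add hCd).div_const 2)
        have := two_mul_le_add_sq ‖B (e i)‖ ‖Cd (e i)‖
        linarith
      refine hdr.congr fun i => by ring
    have hle : (∑' i, ∫⁻ g, ‖f i g‖₊ ∂μG)
        ≤ ∑' i, (((‖B (e i)‖₊ * ‖ψ‖₊) * (‖Cd (e i)‖₊ * ‖φ‖₊) : ℝ≥0) : ℝ≥0∞) := by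
      refine le_trans (ENNReal.tsum_le_tsum hbound) (le_of_eq (tsum_congr fun i => ?_))
      push_cast
      ring
    exact ne_top_of_le_ne_top (ENNReal.tsum_coe_ne_top_iff_summable.2 hd) hle
  -- summability of the double family
  set S : ι × ι → ℂ := fun p =>
    (inner ℂ (e p.1) (B (e p.2)) : ℂ) * (inner ℂ (e p.2) (C (e p.1)) : ℂ) with hSdef
  have hQ : Summable fun p : ι × ι => ‖(inner ℂ (e p.2) (C (e p.1)) : ℂ)‖ ^ 2 := by
    refine (summable_prod_of_nonneg (fun p => by positivity)).2 ⟨?_, ?_⟩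
    · intro i; exact (aux_hasSum_sq e (C (e i))).summable
    · refine Summable.congr hC fun i => ((aux_hasSum_sq e (C (e i))).tsum_eq).symm
  have hP' : Summable fun p : ι × ι => ‖(inner ℂ (e p.2) (B (e p.1)) : ℂ)‖ ^ 2 := by
    refine (summable_prod_of_nonneg (fun p => by positivity)).2 ⟨?_, ?_⟩
    · intro i; exact (aux_hasSum_sq e (B (e i))).summable
    · refine Summable.congr hB fun i => ((aux_hasSum_sq e (B (e i))).tsum_eq).symm
  have hP : Summable fun p : ι × ι => ‖(inner ℂ (e p.1) (B (e p.2)) : ℂ)‖ ^ 2 := by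
    have := (Equiv.prodComm ι ι).summable_iff.2 hP'
    exact this
  have hS : Summable S := by
    apply Summable.of_norm_bounded ((hP.add hQ).div_const 2)
    intro p
    rw [hSdef]
    dsimp only
    rw [norm_mul]
    have h2 := two_mul_le_add_sq ‖(inner ℂ (e p.1) (B (e p.2)) : ℂ)‖
      ‖(inner ℂ (e p.2) (C (e p.1)) : ℂ)‖
    linarith
  -- the trace identity
  have htrace : (∑' i, (inner ℂ (e i) ((B.comp C) (e i)) : ℂ))
      = ∑' i, (inner ℂ (Cd (e i)) (B (e i)) : ℂ) := by
    have h1 : ∀ i, (inner ℂ (e i) ((B.comp C) (e i)) : ℂ) = ∑' j, S (i, j) := by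
      intro i
      have h := e.tsum_inner_mul_inner (Bd (e i)) (C (e i))
      have h2 : ∀ j, (inner ℂ (Bd (e i)) (e j) : ℂ) * (inner ℂ (e j) (C (e i)) : ℂ) = S (i, j) := by
        intro j
        rw [hSdef]
        dsimp only
        rw [hBdd, ContinuousLinearMap.adjoint_inner_left]
      have hAd : (inner ℂ (e i) ((B.comp C) (e i)) : ℂ) = (inner ℂ (Bd (e i)) (C (e i)) : ℂ) := by
        rw [hBdd, ContinuousLinearMap.adjoint_inner_left]
        rfl
      rw [hAd, ← h]
      exact tsum_congr fun j => h2 j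
    have h3 : ∀ i, (inner ℂ (Cd (e i)) (B (e i)) : ℂ) = ∑' j, S (j, i) := by
      intro i
      have h := e.tsum_inner_mul_inner (Cd (e i)) (B (e i))
      have h2 : ∀ j, (inner ℂ (Cd (e i)) (e j) : ℂ) * (inner ℂ (e j) (B (e i)) : ℂ) = S (j, i) := by
        intro j
        rw [hSdef]
        dsimp only
        rw [hCdd, ContinuousLinearMap.adjoint_inner_left, mul_comm]
      rw [← h]
      exact tsum_congr fun j => h2 j
    have hcomm : ∑' i, ∑' j, S (j, i) = ∑' i, ∑' j, S (i, j) :=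
      Summable.tsum_comm (f := fun i j => S (i, j)) hS
    calc ∑' i, (inner ℂ (e i) ((B.comp C) (e i)) : ℂ)
        = ∑' i, ∑' j, S (i, j) := tsum_congr h1
      _ = ∑' i, ∑' j, S (j, i) := hcomm.symm
      _ = ∑' i, (inner ℂ (Cd (e i)) (B (e i)) : ℂ) := (tsum_congr h3).symm
  -- final computation
  calc (∑' i, (inner ℂ (e i) ((B.comp C) (e i)) : ℂ)) * (inner ℂ ψ φ : ℂ)
      = ∑' i, (inner ℂ (Cd (e i)) (B (e i)) : ℂ) * (inner ℂ ψ φ : ℂ) := by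
        rw [htrace, tsum_mul_right]
    _ = ∑' i, ∫ g, f i g ∂μG := (tsum_congr hfint).symm
    _ = ∫ g, ∑' i, f i g ∂μG := (integral_tsum hf_meas hsum_fin).symm
    _ = ∫ g, (inner ℂ (U g ψ) ((B.comp C) (U g φ)) : ℂ) ∂μG := by
        refine integral_congr_ae (Filter.Eventually.of_forall fun g => ?_)
        exact (hsum g).tsum_eq
end
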